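/- arXiv:2512.12603 — 4 statements merged into one kernel-verified Lean document; each statement's English description precedes it below -/
import Mathlib

section
/- For every m ≥ 1, the polynomial identity β(m;t,q) = L_m(1 − q − tq, −tq²) holds in the polynomial ring ℚ[t,q], where L_m is the m-th Lucas polynomial evaluated at x = 1 − q − tq and s = −tq². -/
open Polynomial Finset


/-- `ρ(m;t,d) = Σ_{i=0}^d (m(m-d)/((m-i)(m-d+i)))·C(m-d+i,i)·C(m-i,d-i)·t^i`,
with `ρ(m;t,m) = 1 + t^m`. -/
noncomputable def rho (m d : ℕ) : Polynomial ℚ :=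
  if d = m then 1 + Polynomial.X ^ m
  else
    ∑ i ∈ Finset.range (d + 1),
      Polynomial.C (((m * (m - d) : ℕ) : ℚ) / (((m - i) * (m - d + i) : ℕ) : ℚ) *
          ((m - d + i).choose i : ℚ) * ((m - i).choose (d - i) : ℚ)) *
        Polynomial.X ^ i

/-- `β(m;t,q) = Σ_{d=0}^m ρ(m;t,d)·(-q)^d ∈ ℚ[t][q]` (the outer variable is `q`). -/
noncomputable def betaPoly (m : ℕ) : Polynomial (Polynomial ℚ) :=
  ∑ d ∈ Finset.range (m + 1), Polynomial.C (rho m d) * (-Polynomial.X) ^ d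

/-- The Lucas polynomials, evaluated at elements `x`, `s` of a commutative ring:
`L_0 = 2`, `L_1 = x`, `L_n = x·L_{n-1} + s·L_{n-2}`. -/
def lucasPoly {R : Type*} [CommRing R] (x s : R) : ℕ → R
  | 0 => 2
  | 1 => x
  | n + 2 => x * lucasPoly x s (n + 1) + s * lucasPoly x s n

noncomputable def cc (m d i : ℕ) : ℚ :=
  ((m * (m - d) : ℕ) : ℚ) / (((m - i) * (m - d + i) : ℕ) : ℚ) *
    ((m - d + i).choose i : ℚ) * ((m - i).choose (d - i) : ℚ)

lemma rho_of_ne (m d : ℕ) (h : d ≠ m) :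
    rho m d = ∑ i ∈ Finset.range (d + 1), Polynomial.C (cc m d i) * Polynomial.X ^ i := by
  rw [rho, if_neg h]; rfl

lemma rho_eq_zero (m d : ℕ) (h : m < d) : rho m d = 0 := by
  rw [rho_of_ne m d (by omega)]
  have : m - d = 0 := by omega
  simp [cc, this]

lemma rho_coeff (m d p : ℕ) (h : d ≠ m) :
    (rho m d).coeff p = if p ≤ d then cc m d p else 0 := by
  rw [rho_of_ne m d h, Polynomial.finset_sum_coeff]
  simp only [Polynomial.coeff_C_mul, Polynomial.coeff_X_pow, mul_ite, mul_one, mul_zero]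
  rw [Finset.sum_ite_eq (Finset.range (d+1)) p (fun i => cc m d i)]
  simp [Nat.lt_succ_iff]

lemma cc_left (m d : ℕ) (h : d < m) : cc m d 0 = m.choose d := by
  have h0 : ((m * (m - d) : ℕ) : ℚ) ≠ 0 := by
    have : m * (m - d) ≠ 0 := Nat.mul_ne_zero (by omega) (by omega)
    exact_mod_cast this
  unfold cc
  simp only [Nat.sub_zero, Nat.add_zero, Nat.choose_zero_right, Nat.cast_one, mul_one]
  rw [div_self h0, one_mul]

lemma cc_right (m d : ℕ) (h : d < m) : cc m d d = m.choose d := by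
  have hd : m - d + d = m := by omega
  have h0 : ((m * (m - d) : ℕ) : ℚ) ≠ 0 := by
    have : m * (m - d) ≠ 0 := Nat.mul_ne_zero (by omega) (by omega)
    exact_mod_cast this
  unfold cc
  rw [hd]
  simp only [Nat.sub_self, Nat.choose_zero_right, Nat.cast_one, mul_one]
  rw [show (m - d) * m = m * (m - d) by ring, div_self h0, one_mul]

lemma rho_zero' (m : ℕ) (h : m ≠ 0) : rho m 0 = 1 := by
  rw [rho_of_ne m 0 (by omega)]
  rw [Finset.sum_range_one, cc_left m 0 (by omega)]
  simp

lemma rho_one' (m : ℕ) (h : m ≠ 0) : rho m 1 = (m : Polynomial ℚ) * (1 + Polynomial.X) := by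
  rcases m with _ | m
  · omega
  rcases m with _ | m
  · rw [rho, if_pos rfl]
    push_cast
    ring
  · rw [rho_of_ne _ 1 (by omega), Finset.sum_range_succ, Finset.sum_range_one,
      cc_left _ 1 (by omega), cc_right _ 1 (by omega), Nat.choose_one_right]
    push_cast
    simp only [map_add, map_natCast, map_ofNat, map_one]
    ring

lemma cc_pred (n i : ℕ) (h : i ≤ n) : cc (n+1) n i = (n:ℚ)+1 := by
  unfold cc
  have e1 : n + 1 - n = 1 := by omega
  have e2 : n + 1 - i = (n - i) + 1 := by omega
  rw [e1, e2]
  have e3 : (1 + i).choose i = i + 1 := by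
    rw [add_comm]; exact Nat.choose_succ_self_right i
  have e4 : (n - i + 1).choose (n - i) = (n - i) + 1 := Nat.choose_succ_self_right _
  rw [e3, e4]
  set k := n - i with hk
  push_cast
  have h1 : (k:ℚ)+1 ≠ 0 := by positivity
  have h2 : (1:ℚ)+(i:ℚ) ≠ 0 := by positivity
  field_simp
  ring

lemma rho_pred (n : ℕ) :
    rho (n+1) n = ((n : Polynomial ℚ)+1) * ∑ i ∈ Finset.range (n+1), Polynomial.X ^ i := by
  rw [rho_of_ne _ _ (by omega), Finset.mul_sum]
  refine Finset.sum_congr rfl fun i hi => ?_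
  rw [cc_pred n i (by simpa [Nat.lt_succ_iff] using hi)]
  simp [map_add, map_natCast]

lemma cc_param (m d i e f : ℕ) (hm : m = i+e+f+1) (hd : d = i+e) :
    cc m d i = ((i:ℚ)+e+f+1) * ((f:ℚ)+1) / (((e:ℚ)+f+1) * ((f:ℚ)+1+i)) *
      ((f+1+i).choose i : ℚ) * ((e+f+1).choose e : ℚ) := by
  subst hm hd
  unfold cc
  have e1 : i + e + f + 1 - (i + e) = f + 1 := by omega
  have e2 : i + e + f + 1 - i = e + f + 1 := by omega
  have e3 : i + e - i = e := by omega
  rw [e1, e2, e3]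
  push_cast
  ring

lemma key (u b q : ℕ) :
    cc (q+b+u+4) (q+b+2) (q+1) =
      cc (q+b+u+3) (q+b+2) (q+1) + cc (q+b+u+3) (q+b+1) (q+1) +
      cc (q+b+u+3) (q+b+1) q - cc (q+b+u+2) (q+b) q := by
  rw [cc_param (q+b+u+4) (q+b+2) (q+1) (b+1) (u+1) (by omega) (by omega),
      cc_param (q+b+u+3) (q+b+2) (q+1) (b+1) u (by omega) (by omega),
      cc_param (q+b+u+3) (q+b+1) (q+1) b (u+1) (by omega) (by omega),
      cc_param (q+b+u+3) (q+b+1) q (b+1) (u+1) (by omega) (by omega),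
      cc_param (q+b+u+2) (q+b) q b (u+1) (by omega) (by omega)]
  have r1 : (u+1+1+(q+1)).choose (q+1) = (u+q+2).choose q + (u+q+2).choose (q+1) := by
    rw [show u+1+1+(q+1) = (u+q+2)+1 from by omega]
    exact Nat.choose_succ_succ _ _
  have r2 : (u+1+(q+1)).choose (q+1) = (u+q+2).choose (q+1) := by
    rw [show u+1+(q+1) = u+q+2 from by omega]
  have r3 : (u+1+1+q).choose q = (u+q+2).choose q := by
    rw [show u+1+1+q = u+q+2 from by omega]
  have r4 : ((b+1)+(u+1)+1).choose (b+1) = (b+u+2).choose b + (b+u+2).choose (b+1) := by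
    rw [show (b+1)+(u+1)+1 = (b+u+2)+1 from by omega]
    exact Nat.choose_succ_succ _ _
  have r5 : ((b+1)+u+1).choose (b+1) = (b+u+2).choose (b+1) := by
    rw [show (b+1)+u+1 = b+u+2 from by omega]
  have r6 : (b+(u+1)+1).choose b = (b+u+2).choose b := by
    rw [show b+(u+1)+1 = b+u+2 from by omega]
  rw [r1, r2, r3, r4, r5, r6]
  have hx : (u+q+2).choose (q+1) * (q+1) = (u+q+2).choose q * (u+2) := by
    have h := Nat.choose_succ_right_eq (u+q+2) q
    rwa [show u+q+2-q = u+2 from by omega] at h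
  have hy : (b+u+2).choose (b+1) * (b+1) = (b+u+2).choose b * (u+2) := by
    have h := Nat.choose_succ_right_eq (b+u+2) b
    rwa [show b+u+2-b = u+2 from by omega] at h
  have m1 : ((q:ℚ)+1) ≠ 0 := by positivity
  have m2 : ((b:ℚ)+1) ≠ 0 := by positivity
  have hxq : ((u+q+2).choose (q+1) : ℚ) = ((u+q+2).choose q : ℚ) * ((u:ℚ)+2) / ((q:ℚ)+1) := by
    rw [eq_div_iff m1]
    exact_mod_cast congrArg (Nat.cast : ℕ → ℚ) hx
  have hyq : ((b+u+2).choose (b+1) : ℚ) = ((b+u+2).choose b : ℚ) * ((u:ℚ)+2) / ((b:ℚ)+1) := by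
    rw [eq_div_iff m2]
    exact_mod_cast congrArg (Nat.cast : ℕ → ℚ) hy
  push_cast
  rw [hxq, hyq]
  have m3 : ((u:ℚ)+2) ≠ 0 := by positivity
  have m4 : ((u:ℚ)+1+1+((q:ℚ)+1)) ≠ 0 := by positivity
  have m5 : ((b:ℚ)+1+((u:ℚ)+1)+1) ≠ 0 := by positivity
  have m6 : ((b:ℚ)+((u:ℚ)+1)+1) ≠ 0 := by positivity
  have m7 : ((u:ℚ)+1+((q:ℚ)+1)) ≠ 0 := by positivity
  field_simp
  ring

lemma key' (m j r : ℕ) (h1 : r ≤ j) (h2 : j+2 ≤ m) :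
    cc (m+2) (j+2) (r+1) =
      cc (m+1) (j+2) (r+1) + cc (m+1) (j+1) (r+1) + cc (m+1) (j+1) r - cc m j r := by
  obtain ⟨u, rfl⟩ : ∃ u, m = j+2+u := ⟨m-(j+2), by omega⟩
  obtain ⟨b, rfl⟩ : ∃ b, j = r+b := ⟨j-r, by omega⟩
  rw [show r+b+2+u+2 = r+b+u+4 from by omega,
      show r+b+2+u+1 = r+b+u+3 from by omega,
      show r+b+2+u = r+b+u+2 from by omega]
  exact key u b r

lemma rho_rec (m j : ℕ) :
    rho (m+2) (j+2) = rho (m+1) (j+2) + (1 + Polynomial.X) * rho (m+1) (j+1)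
      - Polynomial.X * rho m j := by
  rcases lt_trichotomy m j with h | h | h
  · -- m < j : everything zero
    rw [rho_eq_zero (m+2) (j+2) (by omega), rho_eq_zero (m+1) (j+2) (by omega),
        rho_eq_zero (m+1) (j+1) (by omega), rho_eq_zero m j (by omega)]
    ring
  · -- j = m : special top case
    subst h
    rw [rho, if_pos rfl, rho_eq_zero (m+1) (m+2) (by omega), rho, if_pos rfl, rho, if_pos rfl]
    ring
  · -- j < m
    rcases eq_or_lt_of_le (Nat.succ_le_of_lt h) with h1 | h1
    · -- m = j+1
      obtain rfl : m = j + 1 := h1.symm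
      rw [show j+1+2 = (j+2)+1 from rfl, show j+1+1 = (j+1)+1 from rfl]
      rw [rho_pred (j+2), rho, if_pos rfl, rho_pred (j+1), rho_pred j]
      have g1 := geom_sum_mul (Polynomial.X : Polynomial ℚ) (j+2+1)
      have g2 := geom_sum_mul (Polynomial.X : Polynomial ℚ) (j+1+1)
      have g3 := geom_sum_mul (Polynomial.X : Polynomial ℚ) (j+1)
      have hX : (Polynomial.X : Polynomial ℚ) - 1 ≠ 0 := by
        simpa using Polynomial.X_sub_C_ne_zero (1 : ℚ)
      refine mul_right_cancel₀ hX ?_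
      push_cast
      linear_combination (((j:Polynomial ℚ))+2+1) * g1
        - (1 + Polynomial.X) * (((j:Polynomial ℚ))+1+1) * g2
        + Polynomial.X * (((j:Polynomial ℚ))+1) * g3
    · -- j+2 ≤ m : generic case
      apply Polynomial.ext
      intro p
      rw [Polynomial.coeff_sub, Polynomial.coeff_add, add_mul, one_mul,
          Polynomial.coeff_add]
      rcases Nat.lt_or_ge p 1 with hp | hp
      · interval_cases p
        · -- p = 0
          simp only [Polynomial.mul_coeff_zero, Polynomial.coeff_X_zero, zero_mul]
          rw [rho_coeff (m+2) (j+2) 0 (by omega), rho_coeff (m+1) (j+2) 0 (by omega),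
              rho_coeff (m+1) (j+1) 0 (by omega)]
          rw [if_pos (by omega), if_pos (by omega), if_pos (by omega)]
          rw [cc_left (m+2) (j+2) (by omega), cc_left (m+1) (j+2) (by omega),
              cc_left (m+1) (j+1) (by omega)]
          rw [Nat.choose_succ_succ (m+1) (j+1)]
          push_cast
          ring
      · obtain ⟨r, rfl⟩ : ∃ r, p = r + 1 := ⟨p - 1, by omega⟩
        have cxm : (Polynomial.X * rho (m+1) (j+1)).coeff (r+1) = (rho (m+1) (j+1)).coeff r :=
          Polynomial.coeff_X_mul _ r
        have cxm2 : (Polynomial.X * rho m j).coeff (r+1) = (rho m j).coeff r :=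
          Polynomial.coeff_X_mul _ r
        rw [cxm, cxm2]
        rw [rho_coeff (m+2) (j+2) (r+1) (by omega), rho_coeff (m+1) (j+2) (r+1) (by omega),
            rho_coeff (m+1) (j+1) (r+1) (by omega), rho_coeff (m+1) (j+1) r (by omega),
            rho_coeff m j r (by omega)]
        rcases Nat.lt_or_ge j r with hr | hr
        · -- r ≥ j+1 : top or out of range
          rcases eq_or_lt_of_le (Nat.succ_le_of_lt hr) with h2 | h2
          · -- r = j+1 : top coefficients, Pascal
            obtain rfl : r = j + 1 := h2.symm
            rw [if_pos (by omega), if_pos (by omega), if_neg (by omega), if_pos (by omega),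
                if_neg (by omega)]
            rw [show j+1+1 = j+2 from rfl]
            rw [cc_right (m+2) (j+2) (by omega), cc_right (m+1) (j+2) (by omega),
                cc_right (m+1) (j+1) (by omega)]
            rw [Nat.choose_succ_succ (m+1) (j+1)]
            push_cast
            ring
          · -- r ≥ j+2 : all zero
            rw [if_neg (by omega), if_neg (by omega), if_neg (by omega), if_neg (by omega),
                if_neg (by omega)]
            ring
        · -- r ≤ j : main case
          rw [if_pos (by omega), if_pos (by omega), if_pos (by omega), if_pos (by omega),
              if_pos (by omega)]
          have K := key' m j r hr (by omega)
          linarith [K]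

lemma betaPoly_eq (m : ℕ) :
    betaPoly m = ∑ d ∈ Finset.range (m+1),
      Polynomial.C ((-1)^d * rho m d) * Polynomial.X ^ d := by
  refine Finset.sum_congr rfl fun d _ => ?_
  rw [map_mul, map_pow, map_neg, map_one,
    neg_eq_neg_one_mul (Polynomial.X : Polynomial (Polynomial ℚ)), mul_pow]
  ring

lemma betaPoly_coeff (m n : ℕ) : (betaPoly m).coeff n = (-1)^n * rho m n := by
  rw [betaPoly_eq, Polynomial.finset_sum_coeff]
  simp only [Polynomial.coeff_C_mul, Polynomial.coeff_X_pow, mul_ite, mul_one, mul_zero]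
  rw [Finset.sum_ite_eq (Finset.range (m+1)) n (fun d => (-1)^d * rho m d)]
  by_cases h : n < m + 1
  · simp [h]
  · simp only [Finset.mem_range, h, if_neg]
    rw [rho_eq_zero m n (by omega)]
    simp

lemma beta_rec (n : ℕ) :
    betaPoly (n+2) =
      ((1 : Polynomial (Polynomial ℚ)) - Polynomial.X
          - Polynomial.C Polynomial.X * Polynomial.X) * betaPoly (n+1)
        + (-((Polynomial.C Polynomial.X : Polynomial (Polynomial ℚ)) * Polynomial.X ^ 2))
          * betaPoly n := by
  have hexpand :
      ((1 : Polynomial (Polynomial ℚ)) - Polynomial.X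
          - Polynomial.C Polynomial.X * Polynomial.X) * betaPoly (n+1)
        + (-((Polynomial.C Polynomial.X : Polynomial (Polynomial ℚ)) * Polynomial.X ^ 2))
          * betaPoly n
      = betaPoly (n+1) - Polynomial.X * betaPoly (n+1)
        - Polynomial.C Polynomial.X * (Polynomial.X * betaPoly (n+1))
        - Polynomial.C Polynomial.X * (Polynomial.X * (Polynomial.X * betaPoly n)) := by
    ring
  rw [hexpand]
  apply Polynomial.ext
  intro p
  rw [Polynomial.coeff_sub, Polynomial.coeff_sub, Polynomial.coeff_sub,
      Polynomial.coeff_C_mul, Polynomial.coeff_C_mul]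
  rcases Nat.lt_or_ge p 2 with hp | hp
  · interval_cases p
    · simp only [Polynomial.mul_coeff_zero, Polynomial.coeff_X_zero, zero_mul, mul_zero,
        sub_zero]
      rw [betaPoly_coeff, betaPoly_coeff]
      rw [rho_zero' (n+2) (by omega), rho_zero' (n+1) (by omega)]
    · have c1 : (Polynomial.X * betaPoly (n+1)).coeff 1 = (betaPoly (n+1)).coeff 0 :=
        Polynomial.coeff_X_mul _ 0
      have c2 : (Polynomial.X * (Polynomial.X * betaPoly n)).coeff 1
          = (Polynomial.X * betaPoly n).coeff 0 := Polynomial.coeff_X_mul _ 0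
      rw [c1, c2]
      simp only [Polynomial.mul_coeff_zero, Polynomial.coeff_X_zero, zero_mul, mul_zero,
        sub_zero]
      rw [betaPoly_coeff, betaPoly_coeff, betaPoly_coeff]
      rw [rho_zero' (n+1) (by omega), rho_one' (n+2) (by omega), rho_one' (n+1) (by omega)]
      push_cast
      ring
  · obtain ⟨r, rfl⟩ : ∃ r, p = r + 2 := ⟨p - 2, by omega⟩
    have c1 : (Polynomial.X * betaPoly (n+1)).coeff (r+2) = (betaPoly (n+1)).coeff (r+1) :=
      Polynomial.coeff_X_mul _ (r+1)
    have c2 : (Polynomial.X * (Polynomial.X * betaPoly n)).coeff (r+2)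
        = (Polynomial.X * betaPoly n).coeff (r+1) := Polynomial.coeff_X_mul _ (r+1)
    have c3 : (Polynomial.X * betaPoly n).coeff (r+1) = (betaPoly n).coeff r :=
      Polynomial.coeff_X_mul _ r
    rw [c1, c2, c3, betaPoly_coeff, betaPoly_coeff, betaPoly_coeff, betaPoly_coeff]
    linear_combination ((-1 : Polynomial ℚ)^r) * rho_rec n r

lemma main (m : ℕ) :
    betaPoly m =
      lucasPoly (1 - Polynomial.X - Polynomial.C Polynomial.X * Polynomial.X)
        (-(Polynomial.C Polynomial.X * Polynomial.X ^ 2)) m := by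
  induction m using Nat.twoStepInduction with
  | zero =>
    show betaPoly 0 = 2
    rw [betaPoly, Finset.sum_range_one, rho, if_pos rfl]
    norm_num
    exact map_ofNat Polynomial.C 2
  | one =>
    show betaPoly 1 = 1 - Polynomial.X - Polynomial.C Polynomial.X * Polynomial.X
    rw [betaPoly, Finset.sum_range_succ, Finset.sum_range_one]
    rw [rho_zero' 1 (by omega), rho, if_pos rfl]
    simp only [map_add, map_one, pow_one, pow_zero, mul_one]
    ring
  | more n ih1 ih2 =>
    have hl : ∀ (x s : Polynomial (Polynomial ℚ)) k, lucasPoly x s (k+2)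
        = x * lucasPoly x s (k+1) + s * lucasPoly x s k := fun _ _ _ => rfl
    rw [hl, ← ih1, ← ih2]
    exact beta_rec n

theorem stmt7 (m : ℕ) (hm : 1 ≤ m) :
    betaPoly m =
      lucasPoly (1 - Polynomial.X - Polynomial.C Polynomial.X * Polynomial.X)
        (-(Polynomial.C Polynomial.X * Polynomial.X ^ 2)) m := by
  exact main m
end

section
/- Let R be a commutative ring and let A, B, C, F ∈ R satisfy A + B·F + C·F² = 0. Then for every n ≥ 0, A^n + (−1)^{n+1}·L_n(B, −A·C)·F^n + C^n·F^{2n} = 0, where L_n(B, −A·C) denotes the n-th Lucas polynomial evaluated at x = B and s = −A·C. -/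
theorem stmt8 {R : Type*} [CommRing R] (A B C F : R)
    (h : A + B * F + C * F ^ 2 = 0) (n : ℕ) :
    A ^ n + (-1 : R) ^ (n + 1) * lucasPoly B (-(A * C)) n * F ^ n + C ^ n * F ^ (2 * n) = 0 := by
  induction n using Nat.twoStepInduction with
  | zero => simp [lucasPoly]; ring
  | one => simpa [lucasPoly] using h
  | more n ih0 ih1 =>
    simp only [lucasPoly]
    linear_combination (A + C * F ^ 2) * ih1 - A * C * F ^ 2 * ih0 -
      ((-1 : R) ^ (n + 2) * lucasPoly B (-(A * C)) (n + 1) * F ^ (n + 1)) * h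
end

section
/- Let C(q) = Σ_{n≥0} Cat(n)·q^n be the generating function of the Catalan numbers. Then for every m ≥ 0 and every n ≥ 0, the coefficient of q^{n+m} in C(q)·(C(q) − 1)^m equals ((2m+1)/(2n + 2m + 1))·binom(2n + 2m + 1, n). -/
/-- The generating function `C(q) = Σ_{n≥0} Cat(n) q^n` of the Catalan numbers. -/
noncomputable def catalanGF : PowerSeries ℚ :=
  PowerSeries.mk fun n => (catalan n : ℚ)

/-!
Since `C = 1 + q C²`, we have `C (C - 1)^m = q^m C^(2m+1)`, so the claim is that the `n`-th
coefficient of `C^k` is the ballot number `k/(2n+k) · binom(2n+k, n)` for `k = 2m+1`. Multiplying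
the functional equation by `C^k` gives `C^(k+1) = C^k + q C^(k+2)`, and the ballot numbers satisfy
the same recurrence, which is Pascal's rule in disguise.
-/

open PowerSeries

def ballotNumber (k n : ℕ) : ℚ :=
  k / ((2 * n + k : ℕ) : ℚ) * ((2 * n + k).choose n : ℚ)

lemma ballotNumber_zero_left (n : ℕ) : ballotNumber 0 n = 0 := by
  simp [ballotNumber]

lemma ballotNumber_zero_right {k : ℕ} (hk : k ≠ 0) : ballotNumber k 0 = 1 := by
  simp [ballotNumber, hk]

lemma ballotNumber_succ_succ (k n : ℕ) :
    ballotNumber (k + 1) (n + 1) = ballotNumber k (n + 1) + ballotNumber (k + 2) n := by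
  set N := 2 * n + k + 2 with hN
  have hpascal : ((N + 1).choose (n + 1) : ℚ) = (N + 1) * N.choose n / (n + 1) := by
    rw [eq_div_iff (by positivity)]
    exact_mod_cast (Nat.add_one_mul_choose_eq N n).symm
  have hnext : (N.choose (n + 1) : ℚ) = N.choose n * (n + k + 2) / (n + 1) := by
    rw [eq_div_iff (by positivity)]
    exact_mod_cast (Nat.choose_succ_right_eq N n).trans (by rw [show N - n = n + k + 2 by omega])
  unfold ballotNumber
  rw [show 2 * (n + 1) + (k + 1) = N + 1 by omega, show 2 * (n + 1) + k = N by omega,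
    show 2 * n + (k + 2) = N by omega, hpascal, hnext, hN]
  push_cast
  field_simp
  ring

lemma catalanGF_eq_map_catalanSeries : catalanGF = map (Nat.castRingHom ℚ) catalanSeries := by
  ext n
  simp [catalanGF]

lemma constantCoeff_catalanGF : constantCoeff catalanGF = 1 := by
  rw [← coeff_zero_eq_constantCoeff_apply]
  simp [catalanGF]

lemma catalanGF_eq_one_add_X_mul_sq : catalanGF = 1 + X * catalanGF ^ 2 := by
  have h := congrArg (map (Nat.castRingHom ℚ)) catalanSeries_sq_mul_X_add_one
  simp only [map_add, map_mul, map_pow, map_X, map_one, ← catalanGF_eq_map_catalanSeries] at h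
  linear_combination -h

lemma catalanGF_pow_succ (k : ℕ) :
    catalanGF ^ (k + 1) = catalanGF ^ k + X * catalanGF ^ (k + 2) := by
  rw [pow_succ]
  nth_rewrite 2 [catalanGF_eq_one_add_X_mul_sq]
  ring

lemma catalanGF_mul_sub_one_pow (m : ℕ) :
    catalanGF * (catalanGF - 1) ^ m = X ^ m * catalanGF ^ (2 * m + 1) := by
  nth_rewrite 2 [catalanGF_eq_one_add_X_mul_sq]
  ring

theorem coeff_catalanGF_pow (n : ℕ) {k : ℕ} (hk : k ≠ 0) :
    coeff n (catalanGF ^ k) = ballotNumber k n := by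
  induction n generalizing k with
  | zero => simp [constantCoeff_catalanGF, ballotNumber_zero_right hk]
  | succ n ih =>
    -- in positive degree the formula also holds for `k = 0`, both sides being `0`
    clear hk
    induction k with
    | zero => simp [ballotNumber_zero_left]
    | succ k ihk =>
      rw [catalanGF_pow_succ, map_add, coeff_succ_X_mul, ihk, ih (by omega),
        ballotNumber_succ_succ]

theorem stmt18 (m n : ℕ) :
    PowerSeries.coeff (n + m) (catalanGF * (catalanGF - 1) ^ m) =
      ((2 * m + 1 : ℚ) / (2 * n + 2 * m + 1)) * ((2 * n + 2 * m + 1).choose n : ℚ) := by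
  rw [catalanGF_mul_sub_one_pow, coeff_X_pow_mul, coeff_catalanGF_pow n (by omega), ballotNumber,
    show 2 * n + (2 * m + 1) = 2 * n + 2 * m + 1 by omega]
  push_cast
  ring
end

section
/- For every m ≥ 1 and all integers d, j with 0 ≤ j ≤ d ≤ m, the coefficient of q^d·t^j in the polynomial L_m(1 − q − tq, −tq²) ∈ ℚ[t,q] equals (−1)^d · Σ_{i=0}^{min(j, d−j)} (−1)^i · binom(m−i, i) · (m/(m−i)) · binom(m−2i, d−2i) · binom(d−2i, j−i). -/
open Polynomial Finset



def Bc (n i : ℕ) : ℕ :=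
  if 2 * i ≤ n then
    (n - i).choose i + (match i with | 0 => 0 | k+1 => (n - k - 2).choose k)
  else 0

lemma Bc_zero (n : ℕ) : Bc n 0 = 1 := by simp [Bc]

lemma Bc_of_lt {n i : ℕ} (h : n < 2 * i) : Bc n i = 0 := by
  simp only [Bc, if_neg (Nat.not_le.mpr h)]

lemma Bc_succ (n k : ℕ) (h : 2 * (k+1) ≤ n) :
    Bc n (k+1) = (n - (k+1)).choose (k+1) + (n - k - 2).choose k := by
  simp [Bc, h]

lemma Bc_rec (n k : ℕ) (hn : 1 ≤ n) : Bc (n+2) (k+1) = Bc (n+1) (k+1) + Bc n k := by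
  rcases Nat.lt_or_ge n (2*k) with h | h
  · rw [Bc_of_lt (show n+2 < 2*(k+1) by omega), Bc_of_lt (show n+1 < 2*(k+1) by omega),
      Bc_of_lt h]
  rcases Nat.eq_or_lt_of_le h with h2 | h2
  · -- n = 2k, k ≥ 1
    obtain ⟨l, rfl⟩ : ∃ l, k = l + 1 := ⟨k - 1, by omega⟩
    have hn' : n = 2*(l+1) := by omega
    subst hn'
    rw [Bc_of_lt (show 2*(l+1)+1 < 2*(l+1+1) by omega)]
    rw [Bc_succ _ _ (by omega), Bc_succ _ _ (by omega)]
    simp only [show 2*(l+1)+2 - (l+1+1) = l+2 from by omega,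
      show 2*(l+1)+2 - (l+1) - 2 = l+1 from by omega,
      show 2*(l+1) - (l+1) = l+1 from by omega,
      show 2*(l+1) - l - 2 = l from by omega,
      Nat.choose_self]
  rcases Nat.eq_or_lt_of_le (show 2*k+1 ≤ n by omega) with h3 | h3
  · -- n = 2k+1
    subst h3
    rw [Bc_succ _ _ (by omega), Bc_succ _ _ (by omega)]
    simp only [show 2*k+1+2 - (k+1) = k+2 from by omega,
      show 2*k+1+2 - k - 2 = k+1 from by omega,
      show 2*k+1+1 - (k+1) = k+1 from by omega,
      show 2*k+1+1 - k - 2 = k from by omega,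
      Nat.choose_self, Nat.choose_succ_self_right]
    match k with
    | 0 => simp [Bc]
    | l+1 =>
      rw [Bc_succ _ _ (by omega)]
      simp only [show 2*(l+1)+1 - (l+1) = l+2 from by omega,
        show 2*(l+1)+1 - l - 2 = l+1 from by omega,
        Nat.choose_succ_self_right, Nat.choose_self]
      omega
  · -- 2k+2 ≤ n
    obtain ⟨a, ha⟩ : ∃ a, n - k - 1 = a := ⟨n - k - 1, rfl⟩
    rw [Bc_succ _ _ (by omega), Bc_succ _ _ (by omega)]
    rw [show n+2 - (k+1) = a+2 from by omega, show n+2 - k - 2 = a+1 from by omega,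
      show n+1 - (k+1) = a+1 from by omega, show n+1 - k - 2 = a from by omega]
    rw [Nat.choose_succ_succ (a+1) k]
    match k with
    | 0 => simp [Bc_zero]; omega
    | l+1 =>
      rw [Bc_succ _ _ (by omega),
        show n - (l+1) = a+1 from by omega, show n - l - 2 = a from by omega,
        Nat.choose_succ_succ a l]
      simp only [Nat.succ_eq_add_one]
      omega

lemma Bc_val (m i : ℕ) (hm : 1 ≤ m) (h : 2*i ≤ m) :
    (Bc m i : ℚ) = ((m - i).choose i : ℚ) * m / ((m - i : ℕ) : ℚ) := by
  have hmi : 0 < m - i := by omega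
  have hmi' : ((m - i : ℕ) : ℚ) ≠ 0 := by positivity
  rw [eq_div_iff hmi']
  match i with
  | 0 =>
    simp [Bc]
  | k+1 =>
    rw [Bc_succ m k h]
    have key : (m - (k+1)).choose (k+1) * m
        = ((m - (k+1)).choose (k+1) + (m - k - 2).choose k) * (m - (k+1)) := by
      have h1 : m - k - 1 = (m - k - 2) + 1 := by omega
      have h2 := Nat.add_one_mul_choose_eq (m - k - 2) k
      -- succ n * n.choose k = (n+1).choose (k+1) * (k+1)
      have h3 : (m - k - 1) * (m - k - 2).choose k = (m - (k+1)).choose (k+1) * (k+1) := by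
        rw [h1]
        rw [show m - (k+1) = (m - k - 2) + 1 from by omega]
        exact_mod_cast h2
      have h4 : m = (m - (k+1)) + (k+1) := by omega
      calc (m - (k+1)).choose (k+1) * m
          = (m - (k+1)).choose (k+1) * (m - (k+1)) + (m - (k+1)).choose (k+1) * (k+1) := by
            rw [← Nat.mul_add, ← h4]
        _ = (m - (k+1)).choose (k+1) * (m - (k+1)) + (m - k - 1) * (m - k - 2).choose k := by
            rw [h3]
        _ = ((m - (k+1)).choose (k+1) + (m - k - 2).choose k) * (m - (k+1)) := by
            rw [show m - k - 1 = m - (k+1) from by omega]; ring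
    exact_mod_cast congrArg (Nat.cast : ℕ → ℚ) key.symm

lemma coeff_linear_pow {A : Type*} [CommRing A] (a b : A) (n k : ℕ) :
    ((C a + C b * X : A[X]) ^ n).coeff k = a ^ (n - k) * b ^ k * n.choose k := by
  rw [add_comm, add_pow, finset_sum_coeff]
  have e : ∀ l ∈ range (n+1), ((C b * X)^l * (C a)^(n-l) * (n.choose l : A[X])).coeff k
      = if k = l then a^(n-k)*b^k*(n.choose k : A) else 0 := by
    intro l hl
    rw [mul_pow, ← C_pow, ← C_pow, ← C_eq_natCast,
      show C (b^l) * X^l * C (a^(n-l)) * C ((n.choose l : A))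
        = C (b^l * a^(n-l) * (n.choose l : A)) * X^l from by rw [C_mul, C_mul]; ring,
      coeff_C_mul, coeff_X_pow]
    split_ifs with hkl
    · subst hkl; ring
    · simp
  rw [Finset.sum_congr rfl e, Finset.sum_ite_eq (range (n+1)) k]
  split_ifs with hk
  · rfl
  · rw [Nat.choose_eq_zero_of_lt (by simpa using hk)]
    simp

lemma lucas_eq {R : Type*} [CommRing R] (x s : R) :
    ∀ n, 1 ≤ n → lucasPoly x s n = ∑ i ∈ range (n+1), (Bc n i : R) * s^i * x^(n - 2*i) := by
  intro n
  induction n using Nat.strong_induction_on with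
  | _ n ih =>
    match n with
    | 0 => intro h; omega
    | 1 =>
      intro _
      simp [lucasPoly, Finset.sum_range_succ, Bc_zero, Bc_of_lt (show 1 < 2*1 by omega)]
    | 2 =>
      intro _
      have : Bc 2 1 = 2 := by simp [Bc]
      simp [lucasPoly, Finset.sum_range_succ, Bc_zero, this,
        Bc_of_lt (show 2 < 2*2 by omega)]
      ring
    | (n+3) =>
      intro _
      have h1 := ih (n+2) (by omega) (by omega)
      have h2 := ih (n+1) (by omega) (by omega)
      have hdef : lucasPoly x s (n+3) = x * lucasPoly x s (n+2) + s * lucasPoly x s (n+1) := rfl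
      rw [hdef, h1, h2, Finset.mul_sum, Finset.mul_sum]
      -- LHS first sum: x * (Bc (n+2) i * s^i * x^(n+2-2i)) = Bc (n+2) i * s^i * x^(n+3-2i)
      have e1 : ∀ i ∈ range (n+3), x * ((Bc (n+2) i : R) * s^i * x^(n+2 - 2*i))
          = (Bc (n+2) i : R) * s^i * x^(n+3 - 2*i) := by
        intro i _
        by_cases h : 2*i ≤ n+2
        · rw [show n+3 - 2*i = (n+2 - 2*i) + 1 from by omega, pow_succ]; ring
        · rw [Bc_of_lt (by omega)]; simp
      rw [Finset.sum_congr rfl e1]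
      have e2 : ∀ i ∈ range (n+2), s * ((Bc (n+1) i : R) * s^i * x^(n+1 - 2*i))
          = (Bc (n+1) i : R) * s^(i+1) * x^(n+1 - 2*i) := by
        intro i _; rw [pow_succ]; ring
      rw [Finset.sum_congr rfl e2]
      -- RHS: peel off i = 0
      rw [Finset.sum_range_succ' _ (n+3)]
      -- LHS first sum: peel off i = 0, then extend
      rw [Finset.sum_range_succ' (fun i => (Bc (n+2) i : R) * s^i * x^(n+3 - 2*i)) (n+2)]
      -- extend the second LHS sum to range (n+3)
      rw [show (n+2 : ℕ) = (n+1)+1 from rfl] -- no-op safeguard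
      have e3 : ∑ i ∈ range (n+2), (Bc (n+1) i : R) * s^(i+1) * x^(n+1 - 2*i)
          = ∑ i ∈ range (n+3), (Bc (n+1) i : R) * s^(i+1) * x^(n+1 - 2*i) := by
        rw [Finset.sum_range_succ _ (n+2), Bc_of_lt (show n+1 < 2*(n+2) by omega)]
        simp
      rw [e3]
      -- extend first peeled sum from range (n+2) to range (n+3)
      have e4 : ∑ i ∈ range (n+2), (Bc (n+2) (i+1) : R) * s^(i+1) * x^(n+3 - 2*(i+1))
          = ∑ i ∈ range (n+3), (Bc (n+2) (i+1) : R) * s^(i+1) * x^(n+3 - 2*(i+1)) := by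
        rw [Finset.sum_range_succ _ (n+2), Bc_of_lt (show n+2 < 2*(n+2+1) by omega)]
        simp
      rw [e4, add_right_comm, ← Finset.sum_add_distrib]
      congr 1
      apply Finset.sum_congr rfl
      intro i _
      have hr : Bc (n+3) (i+1) = Bc (n+2) (i+1) + Bc (n+1) i := Bc_rec (n+1) i (by omega)
      rw [hr, show n+3 - 2*(i+1) = n+1 - 2*i from by omega]
      push_cast
      ring

theorem stmt19 (m : ℕ) (hm : 1 ≤ m) (d j : ℕ) (hjd : j ≤ d) (hdm : d ≤ m) :
    Polynomial.coeff
      (Polynomial.coeff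
        (lucasPoly (1 - Polynomial.X - Polynomial.C Polynomial.X * Polynomial.X :
            Polynomial (Polynomial ℚ))
          (-(Polynomial.C Polynomial.X * Polynomial.X ^ 2)) m) d) j =
    (-1 : ℚ) ^ d *
      ∑ i ∈ Finset.range (min j (d - j) + 1),
        (-1 : ℚ) ^ i * ((m - i).choose i : ℚ) * ((m : ℚ) / ((m - i : ℕ) : ℚ)) *
          ((m - 2 * i).choose (d - 2 * i) : ℚ) * ((d - 2 * i).choose (j - i) : ℚ) := by
  rw [lucas_eq _ _ m hm, finset_sum_coeff, finset_sum_coeff]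
  have key : ∀ i ∈ range (m+1),
      ((((Bc m i : Polynomial (Polynomial ℚ)) * (-(C X * X^2) : Polynomial (Polynomial ℚ))^i
          * ((1 - X - C X * X : Polynomial (Polynomial ℚ)))^(m - 2*i)).coeff d).coeff j)
      = if 2*i ≤ d ∧ i ≤ j then
          (-1:ℚ)^i * (Bc m i : ℚ) * (-1:ℚ)^(d - 2*i) * ((m - 2*i).choose (d - 2*i) : ℚ)
            * ((d - 2*i).choose (j - i) : ℚ)
        else 0 := by
    intro i _
    have hterm : ((Bc m i : Polynomial (Polynomial ℚ)) * (-(C X * X^2) : Polynomial (Polynomial ℚ))^i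
          * ((1 - X - C X * X : Polynomial (Polynomial ℚ)))^(m - 2*i))
        = C ((-1)^i * (Bc m i : Polynomial ℚ) * X^i)
            * ((C 1 + C (-(1+X)) * X)^(m - 2*i) * X^(2*i)) := by
      rw [show ((1 : Polynomial (Polynomial ℚ)) - X - C X * X) = C 1 + C (-(1+X)) * X from by
        simp only [map_neg, map_add, map_one]; ring]
      rw [neg_pow (C X * X^2 : Polynomial (Polynomial ℚ)) i, mul_pow (C X : Polynomial (Polynomial ℚ)) (X^2) i, ← pow_mul (X : Polynomial (Polynomial ℚ)) 2 i]
      simp only [C_mul, C_pow, map_neg, map_one, C_eq_natCast]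
      ring
    rw [hterm, coeff_C_mul, coeff_mul_X_pow', coeff_linear_pow]
    by_cases h2 : 2*i ≤ d
    · rw [if_pos h2, one_pow, one_mul, neg_pow ((1:Polynomial ℚ)+X) (d - 2*i)]
      have h3 : ((-1)^i * (Bc m i : Polynomial ℚ) * X^i) *
            ((-1)^(d - 2*i) * (1+X)^(d - 2*i) * ((m - 2*i).choose (d - 2*i) : Polynomial ℚ))
          = C ((-1)^i * (Bc m i : ℚ) * (-1)^(d - 2*i) * ((m - 2*i).choose (d - 2*i) : ℚ))
            * ((1+X)^(d - 2*i) * X^i) := by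
        simp only [C_mul, map_pow, map_neg, map_one, C_eq_natCast]
        ring
      rw [h3, coeff_C_mul, coeff_mul_X_pow', coeff_one_add_X_pow]
      by_cases h4 : i ≤ j
      · rw [if_pos h4, if_pos ⟨h2, h4⟩]
      · rw [if_neg h4, if_neg (by tauto)]
        simp
    · rw [if_neg h2, if_neg (by tauto)]
      simp
  rw [Finset.sum_congr rfl key]
  have hsub : range (min j (d-j) + 1) ⊆ range (m+1) := by
    intro i hi
    simp only [Finset.mem_range] at *
    omega
  rw [Finset.mul_sum]
  rw [← Finset.sum_subset hsub (by
    intro i hi hni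
    simp only [Finset.mem_range] at hi hni
    by_cases h2 : 2*i ≤ d
    · by_cases h4 : i ≤ j
      · rw [if_pos ⟨h2, h4⟩]
        have hz : (d - 2*i).choose (j - i) = 0 :=
          Nat.choose_eq_zero_of_lt (by omega)
        rw [hz]
        simp
      · rw [if_neg (by tauto)]
    · rw [if_neg (by tauto)])]
  apply Finset.sum_congr rfl
  intro i hi
  simp only [Finset.mem_range] at hi
  have h2 : 2*i ≤ d := by omega
  have h4 : i ≤ j := by omega
  rw [if_pos ⟨h2, h4⟩, Bc_val m i hm (by omega)]
  have hsign : ((-1:ℚ))^(d - 2*i) = (-1)^d := by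
    conv_rhs => rw [show d = d - 2*i + 2*i from by omega]
    rw [pow_add, pow_mul]
    norm_num
  rw [hsign]
  ring
end
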